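/- arXiv:2103.11034 — 5 statements merged into one kernel-verified Lean document; each statement's English description precedes it below -/
import Mathlib

section
/- Let u(ξ,t) solve u_t = D (L0^2/L^2) u_ξξ + ((A' L0 + ξ L')/L) u_ξ + f0 u on 0 < ξ < L0, and define w(ξ,t) = u(ξ,t) (L(t)/L0)^{1/2} exp(−f0 t + ∫_0^t A'(ζ)^2/(4D) dζ + ξ^2 L'(t) L(t)/(4 D L0^2) + ξ A'(t) L(t)/(2 D L0)). Then w satisfies w_t = D (L0^2/L(t)^2) w_ξξ + (ξ^2 L''(t) L(t)/(4 D L0^2) + ξ A''(t) L(t)/(2 D L0)) w on 0 < ξ < L0. -/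
open Real Set intervalIntegral

/-!
Write `w = u · (L/L0)^{1/2} · e^Φ` with `Φ = gaugeExponent`. Then
`w_ξξ = (u_ξξ + 2 Φ_ξ u_ξ + (Φ_ξ² + Φ_ξξ) u) (L/L0)^{1/2} e^Φ`, and the part of `Φ` quadratic in `ξ`
is chosen so that `2 D (L0²/L²) Φ_ξ = (A' L0 + ξ L')/L` is exactly the drift: the `u_ξ` terms cancel.
Of the zeroth-order terms, `D (L0²/L²) Φ_ξξ = L'/(2L)` is the logarithmic derivative of the
prefactor `(L/L0)^{1/2}`, `f0` is removed by `-f0 t`, and `D (L0²/L²) Φ_ξ² = (A' + ξ L'/L0)²/(4D)`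
is matched by `∫ A'²/(4D)` together with the `L'²` and `A' L'` parts of `Φ_t`; what survives is
`ξ² L'' L/(4 D L0²) + ξ A'' L/(2 D L0)`.
-/

theorem hasDerivAt_rpow_half {f : ℝ → ℝ} {f' t : ℝ} (hf : HasDerivAt f f' t) (ht : 0 < f t) :
    HasDerivAt (fun τ => f τ ^ ((1:ℝ)/2)) (f t ^ ((1:ℝ)/2) * f' / (2 * f t)) t := by
  convert hf.rpow_const (p := 1/2) (Or.inl ht.ne') using 1
  rw [rpow_sub ht, rpow_one]
  field_simp

theorem hasDerivAt_quadratic (a b c z : ℝ) :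
    HasDerivAt (fun z => a * z ^ 2 + b * z + c) (2 * a * z + b) z := by
  refine ((((hasDerivAt_pow 2 z).const_mul a).add ((hasDerivAt_id' z).const_mul b)).add_const
    c).congr_deriv ?_
  norm_num
  ring

theorem deriv_mul_exp_quadratic {φ : ℝ → ℝ} (hφ : Differentiable ℝ φ) (a b c : ℝ) :
    deriv (fun z => φ z * exp (a * z ^ 2 + b * z + c))
      = fun z => (deriv φ z + (2 * a * z + b) * φ z) * exp (a * z ^ 2 + b * z + c) := by
  funext z
  exact ((hφ z).hasDerivAt.mul (hasDerivAt_quadratic a b c z).exp).deriv.trans (by ring)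

theorem deriv_deriv_mul_exp_quadratic {φ : ℝ → ℝ} {ξ : ℝ} (hφ : Differentiable ℝ φ)
    (hφ' : DifferentiableAt ℝ (deriv φ) ξ) (a b c : ℝ) :
    deriv (deriv fun z => φ z * exp (a * z ^ 2 + b * z + c)) ξ
      = (deriv (deriv φ) ξ + 2 * (2 * a * ξ + b) * deriv φ ξ
          + ((2 * a * ξ + b) ^ 2 + 2 * a) * φ ξ) * exp (a * ξ ^ 2 + b * ξ + c) := by
  rw [deriv_mul_exp_quadratic hφ]
  have hlin : HasDerivAt (fun z => 2 * a * z + b) (2 * a) ξ := by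
    simpa using ((hasDerivAt_id ξ).const_mul (2 * a)).add_const b
  have hfactor := hφ'.hasDerivAt.add (hlin.mul (hφ ξ).hasDerivAt)
  exact (hfactor.mul (hasDerivAt_quadratic a b c ξ).exp).deriv.trans
    (by simp only [Pi.add_apply, Pi.mul_apply]; ring)

noncomputable def gaugeExponent (D f0 : ℝ) (A L : ℝ → ℝ) (L0 ξ t : ℝ) : ℝ :=
  -f0 * t + (∫ ζ in (0:ℝ)..t, (deriv A ζ) ^ 2 / (4 * D))
    + ξ ^ 2 * deriv L t * L t / (4 * D * L0 ^ 2) + ξ * deriv A t * L t / (2 * D * L0)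

section gaugeExponent

variable {D f0 : ℝ} {A L : ℝ → ℝ} {L0 : ℝ}

theorem gaugeExponent_eq_quadratic (z t : ℝ) :
    gaugeExponent D f0 A L L0 z t
      = deriv L t * L t / (4 * D * L0 ^ 2) * z ^ 2 + deriv A t * L t / (2 * D * L0) * z
        + (-f0 * t + ∫ ζ in (0:ℝ)..t, (deriv A ζ) ^ 2 / (4 * D)) := by
  rw [gaugeExponent]
  ring

theorem deriv_deriv_mul_exp_gaugeExponent {φ : ℝ → ℝ} (hφ : ContDiff ℝ 2 φ) (t ξ : ℝ) :
    deriv (deriv fun z => φ z * exp (gaugeExponent D f0 A L L0 z t)) ξ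
      = (deriv (deriv φ) ξ
          + 2 * (ξ * deriv L t * L t / (2 * D * L0 ^ 2) + deriv A t * L t / (2 * D * L0))
            * deriv φ ξ
          + ((ξ * deriv L t * L t / (2 * D * L0 ^ 2) + deriv A t * L t / (2 * D * L0)) ^ 2
            + deriv L t * L t / (2 * D * L0 ^ 2)) * φ ξ)
        * exp (gaugeExponent D f0 A L L0 ξ t) := by
  simp_rw [gaugeExponent_eq_quadratic]
  rw [deriv_deriv_mul_exp_quadratic (hφ.differentiable two_ne_zero)
    (hφ.differentiable_deriv_two ξ)]
  ring

theorem hasDerivAt_gaugeExponent (hA : ContDiff ℝ 2 A) (hL : ContDiff ℝ 2 L) (ξ t : ℝ) :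
    HasDerivAt (gaugeExponent D f0 A L L0 ξ)
      (-f0 + deriv A t ^ 2 / (4 * D)
        + ξ ^ 2 * (deriv (deriv L) t * L t + deriv L t ^ 2) / (4 * D * L0 ^ 2)
        + ξ * (deriv (deriv A) t * L t + deriv A t * deriv L t) / (2 * D * L0)) t := by
  have hI : HasDerivAt (fun τ => ∫ ζ in (0:ℝ)..τ, (deriv A ζ) ^ 2 / (4 * D))
      ((deriv A t) ^ 2 / (4 * D)) t :=
    ((((hA.continuous_deriv one_le_two).pow 2).div_const _).integral_hasStrictDerivAt
      0 t).hasDerivAt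
  have hL' := (hL.differentiable two_ne_zero t).hasDerivAt
  have hL'' := (hL.differentiable_deriv_two t).hasDerivAt
  have hA'' := (hA.differentiable_deriv_two t).hasDerivAt
  refine (((((hasDerivAt_id' t).const_mul (-f0)).add hI).add
    (((hL''.const_mul (ξ ^ 2)).mul hL').div_const (4 * D * L0 ^ 2))).add
    (((hA''.const_mul ξ).mul hL').div_const (2 * D * L0))).congr_deriv ?_
  ring

end gaugeExponent

theorem stmt_3_general (D f0 : ℝ) (hD : 0 < D)
    (A L : ℝ → ℝ) (hA : ContDiff ℝ 2 A) (hL : ContDiff ℝ 2 L)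
    (hLpos : ∀ t, 0 < L t) (L0 : ℝ)
    (u : ℝ → ℝ → ℝ)
    (hu : ContDiff ℝ 2 (fun p : ℝ × ℝ => u p.1 p.2))
    (hpde : ∀ t ≥ (0:ℝ), ∀ ξ ∈ Ioo (0:ℝ) L0,
      deriv (fun τ => u ξ τ) t
        = D * (L0 ^ 2 / (L t) ^ 2) * deriv (deriv (fun z => u z t)) ξ
          + ((deriv A t * L0 + ξ * deriv L t) / L t) * deriv (fun z => u z t) ξ
          + f0 * u ξ t)
    (w : ℝ → ℝ → ℝ)
    (hw : ∀ ξ t, w ξ t = u ξ t * (L t / L0) ^ ((1:ℝ)/2) *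
      Real.exp (-f0 * t + (∫ ζ in (0:ℝ)..t, (deriv A ζ) ^ 2 / (4 * D))
        + ξ ^ 2 * deriv L t * L t / (4 * D * L0 ^ 2)
        + ξ * deriv A t * L t / (2 * D * L0))) :
    ∀ t ≥ (0:ℝ), ∀ ξ ∈ Ioo (0:ℝ) L0,
      deriv (fun τ => w ξ τ) t
        = D * (L0 ^ 2 / (L t) ^ 2) * deriv (deriv (fun z => w z t)) ξ
          + (ξ ^ 2 * deriv (deriv L) t * L t / (4 * D * L0 ^ 2)
             + ξ * deriv (deriv A) t * L t / (2 * D * L0)) * w ξ t := by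
  intro t ht ξ hξ
  have hL0 : 0 < L0 := hξ.1.trans hξ.2
  obtain rfl : w = fun ξ t =>
      (L t / L0) ^ ((1:ℝ)/2) * (u ξ t * exp (gaugeExponent D f0 A L L0 ξ t)) := by
    funext ξ t
    rw [hw, gaugeExponent]
    ring
  have hu_space : ContDiff ℝ 2 (fun z => u z t) := hu.comp (contDiff_id.prodMk contDiff_const)
  have hu_time : HasDerivAt (fun τ => u ξ τ) (deriv (fun τ => u ξ τ) t) t :=
    ((hu.comp (contDiff_const.prodMk contDiff_id)).differentiable two_ne_zero t).hasDerivAt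
  have hP := hasDerivAt_rpow_half ((hL.differentiable two_ne_zero t).hasDerivAt.div_const L0)
    (div_pos (hLpos t) hL0)
  refine ((hP.mul (hu_time.mul (hasDerivAt_gaugeExponent hA hL ξ t).exp)).deriv).trans ?_
  simp only [Pi.mul_apply]
  rw [deriv_const_mul_field', deriv_const_mul_field,
    deriv_deriv_mul_exp_gaugeExponent hu_space, hpde t ht ξ hξ]
  field_simp [hD.ne', hL0.ne', (hLpos t).ne']
  ring

/-- Removing the first-order terms: if `u` solves the transformed equation on `(0, L0)` and
`w(ξ,t) = u(ξ,t) (L/L0)^{1/2} exp(−f0 t + ∫₀ᵗ A'²/(4D) + ξ² L' L/(4 D L0²) + ξ A' L/(2 D L0))`,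
then `w_t = D (L0²/L²) w_ξξ + (ξ² L'' L/(4 D L0²) + ξ A'' L/(2 D L0)) w` on `(0, L0)`. -/
theorem stmt_3 (D f0 : ℝ) (hD : 0 < D) (hf0 : 0 < f0)
    (A L : ℝ → ℝ) (hA : ContDiff ℝ 2 A) (hL : ContDiff ℝ 2 L)
    (hLpos : ∀ t, 0 < L t) (L0 : ℝ) (hL0 : L0 = L 0)
    (u : ℝ → ℝ → ℝ)
    (hu : ContDiff ℝ 2 (fun p : ℝ × ℝ => u p.1 p.2))
    (hpde : ∀ t ≥ (0:ℝ), ∀ ξ ∈ Ioo (0:ℝ) L0,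
      deriv (fun τ => u ξ τ) t
        = D * (L0 ^ 2 / (L t) ^ 2) * deriv (deriv (fun z => u z t)) ξ
          + ((deriv A t * L0 + ξ * deriv L t) / L t) * deriv (fun z => u z t) ξ
          + f0 * u ξ t)
    (w : ℝ → ℝ → ℝ)
    (hw : ∀ ξ t, w ξ t = u ξ t * (L t / L0) ^ ((1:ℝ)/2) *
      Real.exp (-f0 * t + (∫ ζ in (0:ℝ)..t, (deriv A ζ) ^ 2 / (4 * D))
        + ξ ^ 2 * deriv L t * L t / (4 * D * L0 ^ 2)
        + ξ * deriv A t * L t / (2 * D * L0))) :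
    ∀ t ≥ (0:ℝ), ∀ ξ ∈ Ioo (0:ℝ) L0,
      deriv (fun τ => w ξ τ) t
        = D * (L0 ^ 2 / (L t) ^ 2) * deriv (deriv (fun z => w z t)) ξ
          + (ξ ^ 2 * deriv (deriv L) t * L t / (4 * D * L0 ^ 2)
             + ξ * deriv (deriv A) t * L t / (2 * D * L0)) * w ξ t :=
  stmt_3_general D f0 hD A L hA hL hLpos L0 u hu hpde w hw
end

section
/- Let g be a positive C^2 function on (0, L0), continuous on [0, L0] with g(0) = g(L0) = 0, satisfying σ g(ξ) = D g''(ξ) + (−ρ^2 ξ^2/(4 D L0^4) + γ1 ξ/(2 D L0^3)) g(ξ) on (0, L0), with ρ ≠ 0. Then σ < −|ρ|/(2 L0^2) + γ1^2/(4 D ρ^2 L0^2). -/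
/-!
Completing the square in the potential `V` shows that the Gaussian `φ ξ = exp (-(a/2) (ξ - c)²)`,
with `a = |ρ| / (2 D L0²)` and `c = γ1 L0 / ρ²`, is a positive solution of `D φ'' + V φ = E φ` on
all of `ℝ`, where `E` is the right-hand side of the bound (a harmonic-oscillator ground state).
If `σ ≥ E`, the Wronskian `W = g' φ - g φ'` satisfies `D W' = (σ - E) g φ ≥ 0`, so it is monotone.
Since `(g / φ)' = W / φ²`, the quotient `g / φ` first decreases and then increases, hence is
bounded by its boundary values, which vanish; this contradicts `g > 0`.
-/

open Real Set

lemma le_max_of_hasDerivAt_div_monotoneOn {u W k : ℝ → ℝ} {a b x : ℝ}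
    (hu : ContinuousOn u (Icc a b)) (hu' : ∀ y ∈ Ioo a b, HasDerivAt u (W y / k y) y)
    (hk : ∀ y ∈ Ioo a b, 0 < k y) (hW : MonotoneOn W (Ioo a b)) (hx : x ∈ Ioo a b) :
    u x ≤ max (u a) (u b) := by
  by_cases hWx : W x ≤ 0
  · have hanti : AntitoneOn u (Icc a x) := by
      refine antitoneOn_of_hasDerivWithinAt_nonpos (f' := fun y => W y / k y)
        (convex_Icc a x) (hu.mono (Icc_subset_Icc_right hx.2.le)) (fun y hy => ?_) (fun y hy => ?_)
      all_goals
        rw [interior_Icc] at hy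
        have hy' : y ∈ Ioo a b := ⟨hy.1, hy.2.trans hx.2⟩
      · exact (hu' y hy').hasDerivWithinAt
      · exact div_nonpos_of_nonpos_of_nonneg ((hW hy' hx hy.2.le).trans hWx) (hk y hy').le
    exact le_max_of_le_left
      (hanti (left_mem_Icc.2 hx.1.le) (right_mem_Icc.2 hx.1.le) hx.1.le)
  · have hmono : MonotoneOn u (Icc x b) := by
      refine monotoneOn_of_hasDerivWithinAt_nonneg (f' := fun y => W y / k y)
        (convex_Icc x b) (hu.mono (Icc_subset_Icc_left hx.1.le)) (fun y hy => ?_) (fun y hy => ?_)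
      all_goals
        rw [interior_Icc] at hy
        have hy' : y ∈ Ioo a b := ⟨hx.1.trans hy.1, hy.2⟩
      · exact (hu' y hy').hasDerivWithinAt
      · exact div_nonneg ((not_le.1 hWx).le.trans (hW hx hy' hy.1.le)) (hk y hy').le
    exact le_max_of_le_right
      (hmono (left_mem_Icc.2 hx.2.le) (right_mem_Icc.2 hx.2.le) hx.2.le)

theorem dirichlet_eigenvalue_lt_of_pos_solution {a b D σ E : ℝ} {V g g' g'' φ φ' φ'' : ℝ → ℝ}
    (hab : a < b) (hD : 0 < D)
    (hg : ContinuousOn g (Icc a b)) (hga : g a = 0) (hgb : g b = 0)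
    (hgpos : ∀ x ∈ Ioo a b, 0 < g x)
    (hg' : ∀ x ∈ Ioo a b, HasDerivAt g (g' x) x) (hg'' : ∀ x ∈ Ioo a b, HasDerivAt g' (g'' x) x)
    (hgeq : ∀ x ∈ Ioo a b, D * g'' x + V x * g x = σ * g x)
    (hφpos : ∀ x ∈ Icc a b, 0 < φ x)
    (hφ' : ∀ x ∈ Icc a b, HasDerivAt φ (φ' x) x) (hφ'' : ∀ x ∈ Ioo a b, HasDerivAt φ' (φ'' x) x)
    (hφeq : ∀ x ∈ Ioo a b, D * φ'' x + V x * φ x = E * φ x) :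
    σ < E := by
  by_contra! hEσ
  set W : ℝ → ℝ := fun x => g' x * φ x - g x * φ' x
  have hW' : ∀ x ∈ Ioo a b, HasDerivAt W ((σ - E) / D * (g x * φ x)) x := by
    intro x hx
    refine (((hg'' x hx).mul (hφ' x (Ioo_subset_Icc_self hx))).sub
      ((hg' x hx).mul (hφ'' x hx))).congr_deriv ?_
    rw [div_mul_eq_mul_div, eq_div_iff hD.ne']
    linear_combination φ x * hgeq x hx - g x * hφeq x hx
  have hWmono : MonotoneOn W (Ioo a b) := by
    refine monotoneOn_of_hasDerivWithinAt_nonneg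
      (f' := fun x => (σ - E) / D * (g x * φ x)) (convex_Ioo a b)
      (fun x hx => (hW' x hx).continuousAt.continuousWithinAt) (fun x hx => ?_) (fun x hx => ?_)
    all_goals rw [interior_Ioo] at hx
    · exact (hW' x hx).hasDerivWithinAt
    · have := hφpos x (Ioo_subset_Icc_self hx)
      have := hgpos x hx
      have : 0 ≤ σ - E := sub_nonneg.2 hEσ
      positivity
  have hquot : ContinuousOn (fun x => g x / φ x) (Icc a b) :=
    hg.div (fun x hx => (hφ' x hx).continuousAt.continuousWithinAt) fun x hx => (hφpos x hx).ne'
  have hmid : (a + b) / 2 ∈ Ioo a b := ⟨by linarith, by linarith⟩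
  have hle := le_max_of_hasDerivAt_div_monotoneOn hquot
    (fun x hx => (hg' x hx).div (hφ' x (Ioo_subset_Icc_self hx))
      (hφpos x (Ioo_subset_Icc_self hx)).ne')
    (fun x hx => pow_pos (hφpos x (Ioo_subset_Icc_self hx)) 2) hWmono hmid
  simp only [hga, hgb, zero_div, max_self] at hle
  exact hle.not_gt (div_pos (hgpos _ hmid) (hφpos _ (Ioo_subset_Icc_self hmid)))

lemma hasDerivAt_exp_neg_mul_sq (a c x : ℝ) :
    HasDerivAt (fun y => exp (-(a / 2) * (y - c) ^ 2))
      (-a * (x - c) * exp (-(a / 2) * (x - c) ^ 2)) x := by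
  convert ((((hasDerivAt_id' x).sub_const c).fun_pow 2).const_mul (-(a / 2))).exp using 1
  ring

lemma hasDerivAt_mul_exp_neg_mul_sq (a c x : ℝ) :
    HasDerivAt (fun y => -a * (y - c) * exp (-(a / 2) * (y - c) ^ 2))
      ((a ^ 2 * (x - c) ^ 2 - a) * exp (-(a / 2) * (x - c) ^ 2)) x :=
  ((((hasDerivAt_id' x).sub_const c).const_mul (-a)).mul
    (hasDerivAt_exp_neg_mul_sq a c x)).congr_deriv (by ring)

/-- Eigenvalue bound: if `g > 0` on `(0,L0)` with Dirichlet conditions solves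
`σ g = D g'' + (−ρ² ξ²/(4 D L0⁴) + γ1 ξ/(2 D L0³)) g` with `ρ ≠ 0`, then
`σ < −|ρ|/(2 L0²) + γ1²/(4 D ρ² L0²)`. -/
theorem stmt_4 (D L0 ρ γ1 σ : ℝ) (hD : 0 < D) (hL0 : 0 < L0) (hρ : ρ ≠ 0)
    (g : ℝ → ℝ)
    (hgC2 : ContDiffOn ℝ 2 g (Ioo 0 L0))
    (hgcont : ContinuousOn g (Icc 0 L0))
    (hgpos : ∀ ξ ∈ Ioo (0:ℝ) L0, 0 < g ξ)
    (hg0 : g 0 = 0) (hgL0 : g L0 = 0)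
    (hode : ∀ ξ ∈ Ioo (0:ℝ) L0,
      σ * g ξ = D * deriv (deriv g) ξ
        + (-ρ ^ 2 * ξ ^ 2 / (4 * D * L0 ^ 4) + γ1 * ξ / (2 * D * L0 ^ 3)) * g ξ) :
    σ < -|ρ| / (2 * L0 ^ 2) + γ1 ^ 2 / (4 * D * ρ ^ 2 * L0 ^ 2) := by
  set a := |ρ| / (2 * D * L0 ^ 2)
  set c := γ1 * L0 / ρ ^ 2
  have hg' : ∀ ξ ∈ Ioo 0 L0, HasDerivAt g (deriv g ξ) ξ := fun ξ hξ =>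
    ((hgC2.contDiffAt (isOpen_Ioo.mem_nhds hξ)).differentiableAt two_ne_zero).hasDerivAt
  have hg'' : ∀ ξ ∈ Ioo 0 L0, HasDerivAt (deriv g) (deriv (deriv g) ξ) ξ := fun ξ hξ =>
    (((hgC2.deriv_of_isOpen isOpen_Ioo (by norm_num)).contDiffAt
      (isOpen_Ioo.mem_nhds hξ)).differentiableAt one_ne_zero).hasDerivAt
  refine dirichlet_eigenvalue_lt_of_pos_solution hL0 hD hgcont hg0 hgL0 hgpos hg' hg''
    (fun ξ hξ => (hode ξ hξ).symm) (fun ξ _ => exp_pos _)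
    (fun ξ _ => hasDerivAt_exp_neg_mul_sq a c ξ)
    (fun ξ _ => hasDerivAt_mul_exp_neg_mul_sq a c ξ) (fun ξ _ => ?_)
  have hρ' : |ρ| ≠ 0 := abs_ne_zero.2 hρ
  rw [← mul_assoc, ← add_mul]
  congr 1
  simp only [a, c, ← sq_abs ρ]
  field_simp
  ring
end

section
/- For L(t) = L0 fixed and A(t) = (γ1/(2 L0^3)) t^2 + c t + d, the function u_n(ξ,t) = exp(σ_n t) g_n(ξ) exp(f0 t − (1/(4D))(γ1^2 t^3/(3 L0^6) + c γ1 t^2/L0^3 + c^2 t) − (ξ/(2 D L0))(γ1 t / L0^2 + c L0)) solves u_t = D u_ξξ + ((A'(t) L0 + ξ·0)/L0) u_ξ + f0 u on (0, L0) with u_n(0,t) = u_n(L0,t) = 0, where g_n is a Dirichlet eigenfunction on (0, L0) satisfying σ_n g_n = D g_n'' + (γ1 ξ/(2 D L0^3)) g_n with g_n(0) = g_n(L0) = 0. -/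
open Real Set

/-!
Writing `a = A'`, the drift is removed by the gauge factor `exp (-a ξ / (2D))`, which turns
`u_t = D u_ξξ + a u_ξ + f0 u` into `w_t = D w_ξξ + (f0 - a² / (4D) + ξ a' / (2D)) w`.
Since `a' = γ1 / L0³` is constant, the potential `ξ a' / (2D)` depends on `ξ` only, so the
equation separates: its `ξ`-part is the Sturm–Liouville problem for `g_n`, and the time factor
`exp ((σ_n + f0) t - (1/(4D)) ∫₀ᵗ a²)` is the remaining exponential in `u_n`.
-/

theorem hasDerivAt_mul_exp_sub_mul {g : ℝ → ℝ} (hg : Differentiable ℝ g) (β b z : ℝ) :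
    HasDerivAt (fun z => g z * exp (β - b * z)) ((deriv g z - b * g z) * exp (β - b * z)) z := by
  refine ((hg z).hasDerivAt.mul (((hasDerivAt_id z).const_mul b).const_sub β).exp).congr_deriv ?_
  simp only [id]
  ring

theorem deriv_mul_exp_sub_mul {g : ℝ → ℝ} (hg : Differentiable ℝ g) (β b : ℝ) :
    deriv (fun z => g z * exp (β - b * z)) = fun z => (deriv g z - b * g z) * exp (β - b * z) :=
  funext fun z => (hasDerivAt_mul_exp_sub_mul hg β b z).deriv

theorem deriv_deriv_mul_exp_sub_mul {g : ℝ → ℝ} (hg : ContDiff ℝ 2 g) (β b z : ℝ) :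
    deriv (deriv fun z => g z * exp (β - b * z)) z
      = (deriv (deriv g) z - 2 * b * deriv g z + b ^ 2 * g z) * exp (β - b * z) := by
  have hg₁ : Differentiable ℝ g := hg.differentiable two_ne_zero
  have hg₂ : Differentiable ℝ (deriv g) := hg.differentiable_deriv_two
  have h : HasDerivAt (fun z => deriv g z - b * g z) (deriv (deriv g) z - b * deriv g z) z :=
    (hg₂ z).hasDerivAt.sub ((hg₁ z).hasDerivAt.const_mul b)
  rw [deriv_mul_exp_sub_mul hg₁,
    (hasDerivAt_mul_exp_sub_mul (g := fun z => deriv g z - b * g z) (hg₂.sub (hg₁.const_mul b))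
      β b z).deriv, h.deriv]
  ring

theorem drift_diffusion_eq_of_sturmLiouville {g a θ : ℝ → ℝ} {u : ℝ → ℝ → ℝ} {D σ f0 a' t ξ : ℝ}
    (hD : D ≠ 0) (hg : ContDiff ℝ 2 g) (ha : HasDerivAt a a' t)
    (hθ : HasDerivAt θ (σ + f0 - a t ^ 2 / (4 * D)) t)
    (hSL : σ * g ξ = D * deriv (deriv g) ξ + a' * ξ / (2 * D) * g ξ)
    (hu : ∀ z τ, u z τ = g z * exp (θ τ - a τ / (2 * D) * z)) :
    deriv (fun τ => u ξ τ) t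
      = D * deriv (deriv fun z => u z t) ξ + a t * deriv (fun z => u z t) ξ + f0 * u ξ t := by
  have hx : (fun z => u z t) = fun z => g z * exp (θ t - a t / (2 * D) * z) := funext (hu · t)
  have ht : HasDerivAt (fun τ => u ξ τ)
      (g ξ * ((σ + f0 - a t ^ 2 / (4 * D) - a' / (2 * D) * ξ)
        * exp (θ t - a t / (2 * D) * ξ))) t := by
    simp only [hu]
    exact (((hθ.sub ((ha.div_const (2 * D)).mul_const ξ)).exp).const_mul (g ξ)).congr_deriv
      (by simp only [Pi.sub_apply]; ring)
  rw [ht.deriv, hx, deriv_deriv_mul_exp_sub_mul hg,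
    deriv_mul_exp_sub_mul (hg.differentiable two_ne_zero), hu]
  linear_combination (norm := skip) exp (θ t - a t / (2 * D) * ξ) * hSL
  field_simp
  ring

theorem stmt_6_general (D f0 L0 γ1 c d σn : ℝ) (hD : 0 < D) (hL0 : 0 < L0)
    (gn : ℝ → ℝ) (hgn : ContDiff ℝ 2 gn)
    (hgn0 : gn 0 = 0) (hgnL0 : gn L0 = 0)
    (hSL : ∀ ξ ∈ Icc (0:ℝ) L0,
      σn * gn ξ = D * deriv (deriv gn) ξ + (γ1 * ξ / (2 * D * L0 ^ 3)) * gn ξ)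
    (A : ℝ → ℝ) (hA : ∀ t, A t = γ1 / (2 * L0 ^ 3) * t ^ 2 + c * t + d)
    (u : ℝ → ℝ → ℝ)
    (hu : ∀ ξ t, u ξ t = Real.exp (σn * t) * gn ξ *
      Real.exp (f0 * t
        - (1 / (4 * D)) * (γ1 ^ 2 * t ^ 3 / (3 * L0 ^ 6)
            + c * γ1 * t ^ 2 / L0 ^ 3 + c ^ 2 * t)
        - (ξ / (2 * D * L0)) * (γ1 * t / L0 ^ 2 + c * L0))) :
    (∀ t, ∀ ξ ∈ Ioo (0:ℝ) L0,
      deriv (fun τ => u ξ τ) t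
        = D * deriv (deriv (fun z => u z t)) ξ
          + ((deriv A t * L0 + ξ * 0) / L0) * deriv (fun z => u z t) ξ
          + f0 * u ξ t) ∧
    (∀ t, u 0 t = 0 ∧ u L0 t = 0) := by
  have ha (t : ℝ) : HasDerivAt (fun τ => γ1 / L0 ^ 3 * τ + c) (γ1 / L0 ^ 3) t := by
    simpa using ((hasDerivAt_id t).const_mul (γ1 / L0 ^ 3)).add_const c
  have hθ (t : ℝ) : HasDerivAt (fun τ => σn * τ + (f0 * τ - 1 / (4 * D) * (γ1 ^ 2 * τ ^ 3 /
      (3 * L0 ^ 6) + c * γ1 * τ ^ 2 / L0 ^ 3 + c ^ 2 * τ)))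
      (σn + f0 - (γ1 / L0 ^ 3 * t + c) ^ 2 / (4 * D)) t := by
    refine (((hasDerivAt_id t).const_mul σn).add (((hasDerivAt_id t).const_mul f0).sub
      ((((((hasDerivAt_pow 3 t).const_mul (γ1 ^ 2)).div_const (3 * L0 ^ 6)).add
        (((hasDerivAt_pow 2 t).const_mul (c * γ1)).div_const (L0 ^ 3))).add
          ((hasDerivAt_id t).const_mul (c ^ 2))).const_mul (1 / (4 * D))))).congr_deriv ?_
    ring
  have hdA (t : ℝ) : deriv A t = γ1 / L0 ^ 3 * t + c := by
    rw [show A = _ from funext hA]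
    refine (((hasDerivAt_pow 2 t).const_mul _).add ((hasDerivAt_id t).const_mul c)).add_const d
      |>.deriv.trans ?_
    field_simp
    ring
  refine ⟨fun t ξ hξ => ?_, fun t => by simp [hu, hgn0, hgnL0]⟩
  rw [hdA, mul_zero, add_zero, mul_div_cancel_right₀ _ hL0.ne']
  refine drift_diffusion_eq_of_sturmLiouville hD.ne' hgn (ha t) (hθ t) ?_ fun z τ => ?_
  · rw [hSL ξ (Ioo_subset_Icc_self hξ)]
    ring
  · rw [hu, mul_comm (exp _) (gn z), mul_assoc, ← exp_add]
    congr 2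
    field_simp
    ring

/-- Exact separable solution for fixed length `L0` and `A(t) = γ1 t²/(2 L0³) + c t + d`. -/
theorem stmt_6 (D f0 L0 γ1 c d σn : ℝ) (hD : 0 < D) (hf0 : 0 < f0) (hL0 : 0 < L0)
    (gn : ℝ → ℝ) (hgn : ContDiff ℝ 2 gn)
    (hgn0 : gn 0 = 0) (hgnL0 : gn L0 = 0)
    (hSL : ∀ ξ ∈ Icc (0:ℝ) L0,
      σn * gn ξ = D * deriv (deriv gn) ξ + (γ1 * ξ / (2 * D * L0 ^ 3)) * gn ξ)
    (A : ℝ → ℝ) (hA : ∀ t, A t = γ1 / (2 * L0 ^ 3) * t ^ 2 + c * t + d)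
    (u : ℝ → ℝ → ℝ)
    (hu : ∀ ξ t, u ξ t = Real.exp (σn * t) * gn ξ *
      Real.exp (f0 * t
        - (1 / (4 * D)) * (γ1 ^ 2 * t ^ 3 / (3 * L0 ^ 6)
            + c * γ1 * t ^ 2 / L0 ^ 3 + c ^ 2 * t)
        - (ξ / (2 * D * L0)) * (γ1 * t / L0 ^ 2 + c * L0))) :
    (∀ t, ∀ ξ ∈ Ioo (0:ℝ) L0,
      deriv (fun τ => u ξ τ) t
        = D * deriv (deriv (fun z => u z t)) ξ
          + ((deriv A t * L0 + ξ * 0) / L0) * deriv (fun z => u z t) ξ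
          + f0 * u ξ t) ∧
    (∀ t, u 0 t = 0 ∧ u L0 t = 0) :=
  stmt_6_general D f0 L0 γ1 c d σn hD hL0 gn hgn hgn0 hgnL0 hSL A hA u hu
end

section
/- Let ψ̂(x,t) be defined via û(ξ,t) = exp(−D π^2 t / (L0 (L0 + 2 c* t))) sin(π ξ / L0) (L0/(L0 + 2 c* t))^{1/2} exp((ξ c*/(2 D L0)) (L0 + 2 c* t)(1 − ξ/L0)) with ψ̂(x,t) = û(ξ,t) for ξ = (x + c* t + L0/2) L0/(L0 + 2 c* t). Then for fixed y > 0, ψ̂(−c* t − L0/2 + y, t) = Θ(t^{−3/2}) as t → ∞: that is, there exist positive constants β0 ≤ β1 and T such that β0 t^{−3/2} ≤ ψ̂(−c* t − L0/2 + y, t) ≤ β1 t^{−3/2} for all t ≥ T. -/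
/-!
At distance `y` from the left boundary, with `M = L0 + 2 c* t`, the sine factor is
`sin (π y / M) ~ π y / M ~ π y / (2 c* t)`, the square-root factor is `(L0 / M)^{1/2} ~ (L0 / (2 c* t))^{1/2}`,
and both exponential factors tend to finite positive limits. Hence `ψ̂ · t^{3/2}` converges to a positive
constant, and a positive limit of a ratio gives two-sided bounds for large `t`.
-/

open Real Set Filter Topology

theorem exists_bounds_of_tendsto_div {f g : ℝ → ℝ} {ℓ : ℝ} (hℓ : 0 < ℓ)
    (hg : ∀ᶠ t in atTop, 0 < g t) (hfg : Tendsto (fun t => f t / g t) atTop (𝓝 ℓ)) :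
    ∃ β0 β1 T : ℝ, 0 < β0 ∧ β0 ≤ β1 ∧ 0 < T ∧
      ∀ t ≥ T, β0 * g t ≤ f t ∧ f t ≤ β1 * g t := by
  have hnear : Icc (ℓ / 2) (2 * ℓ) ∈ 𝓝 ℓ := Icc_mem_nhds (by linarith) (by linarith)
  obtain ⟨T, hT⟩ := eventually_atTop.mp ((hfg.eventually hnear).and hg)
  refine ⟨ℓ / 2, 2 * ℓ, max T 1, by positivity, by linarith, by positivity, fun t ht => ?_⟩
  obtain ⟨⟨hlo, hhi⟩, hgt⟩ := hT t (le_of_max_le_left ht)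
  exact ⟨(le_div_iff₀ hgt).mp hlo, (div_le_iff₀ hgt).mp hhi⟩

theorem tendsto_div_const_add_mul_atTop (a : ℝ) {b : ℝ} (hb : 0 < b) :
    Tendsto (fun t => t / (a + b * t)) atTop (𝓝 b⁻¹) := by
  have hquot : Tendsto (fun t => a / t + b) atTop (𝓝 b) := by
    simpa using (tendsto_const_nhds.div_atTop tendsto_id).add (tendsto_const_nhds (x := b))
  refine (hquot.inv₀ hb.ne').congr' ?_
  filter_upwards [eventually_gt_atTop 0] with t ht
  rw [div_add' _ _ _ ht.ne', inv_div, add_comm, mul_comm]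

theorem tendsto_mul_sin_div_atTop (c : ℝ) :
    Tendsto (fun x => x * sin (c / x)) atTop (𝓝 c) := by
  have hsinc : Tendsto (fun x => c * sinc (c / x)) atTop (𝓝 (c * sinc 0)) :=
    ((continuous_sinc.tendsto 0).comp (tendsto_const_nhds.div_atTop tendsto_id)).const_mul c
  rw [sinc_zero, mul_one] at hsinc
  refine hsinc.congr' ?_
  filter_upwards [eventually_gt_atTop 0] with x hx
  rcases eq_or_ne c 0 with rfl | hc
  · simp
  · rw [sinc_of_ne_zero (div_ne_zero hc hx.ne')]
    field_simp

/-- `ψ̂(−c* t − L0/2 + y, t)`, written with `M = L0 + 2 c* t` for the length of the interval. -/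
noncomputable def boundaryProfile (D L0 cs y t : ℝ) : ℝ :=
  let M := L0 + 2 * cs * t
  exp (-D * π ^ 2 * t / (L0 * M)) * sin (π * y / M) * (L0 / M) ^ ((1 : ℝ) / 2) *
    exp (cs * y / (2 * D) * (1 - y / M))

theorem boundaryProfile_div_rpow {D L0 cs y t : ℝ} (hL0 : 0 < L0) (hcs : 0 < cs) (ht : 0 < t) :
    let M := L0 + 2 * cs * t
    boundaryProfile D L0 cs y t / t ^ (-(3 : ℝ) / 2) =
      exp (-D * π ^ 2 / L0 * (t / M)) * exp (cs * y / (2 * D) * (1 - y / M)) *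
        (M * sin (π * y / M)) * (t / M) * (L0 * (t / M)) ^ ((1 : ℝ) / 2) := by
  intro M
  have hM : 0 < M := by positivity
  have hroot : (L0 * (t / M)) ^ ((1 : ℝ) / 2) = (L0 / M) ^ ((1 : ℝ) / 2) * t ^ ((1 : ℝ) / 2) := by
    rw [← mul_rpow (by positivity) ht.le]; ring_nf
  have hpow : t ^ (-(3 : ℝ) / 2) = (t * t ^ ((1 : ℝ) / 2))⁻¹ := by
    rw [← rpow_one_add' ht.le (by norm_num), ← rpow_neg ht.le]; norm_num
  rw [boundaryProfile, hroot, hpow]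
  simp only [M] at hM ⊢
  field_simp

theorem tendsto_boundaryProfile_div_rpow (D : ℝ) {L0 cs : ℝ} (y : ℝ) (hL0 : 0 < L0)
    (hcs : 0 < cs) :
    Tendsto (fun t => boundaryProfile D L0 cs y t / t ^ (-(3 : ℝ) / 2)) atTop
      (𝓝 (exp (-D * π ^ 2 / L0 * (2 * cs)⁻¹) * exp (cs * y / (2 * D)) * (π * y) *
        (2 * cs)⁻¹ * (L0 * (2 * cs)⁻¹) ^ ((1 : ℝ) / 2))) := by
  have hM : Tendsto (fun t => L0 + 2 * cs * t) atTop atTop :=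
    tendsto_atTop_add_const_left _ _ (tendsto_id.const_mul_atTop (by positivity))
  have hratio := tendsto_div_const_add_mul_atTop L0 (by positivity : 0 < 2 * cs)
  have hdrift : Tendsto (fun t => exp (cs * y / (2 * D) * (1 - y / (L0 + 2 * cs * t)))) atTop
      (𝓝 (exp (cs * y / (2 * D)))) := by
    simpa using (((tendsto_const_nhds (x := (1 : ℝ))).sub
      ((tendsto_const_nhds (x := y)).div_atTop hM)).const_mul (cs * y / (2 * D))).rexp
  refine (((((hratio.const_mul (-D * π ^ 2 / L0)).rexp.mul hdrift).mul
    ((tendsto_mul_sin_div_atTop (π * y)).comp hM)).mul hratio).mul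
    ((hratio.const_mul L0).rpow_const (Or.inr (by norm_num)))).congr' ?_
  filter_upwards [eventually_gt_atTop 0] with t ht
  rw [boundaryProfile_div_rpow hL0 hcs ht]
  rfl

/-- For the exact separable solution `ψ̂` on the interval `(−c*t − L0/2, c*t + L0/2)`,
at fixed distance `y > 0` from the left boundary, `ψ̂(−c*t − L0/2 + y, t) = Θ(t^{−3/2})`. -/
theorem stmt_16 (D f0 L0 : ℝ) (hD : 0 < D) (hf0 : 0 < f0) (hL0 : 0 < L0)
    (cs : ℝ) (hcs : cs = 2 * Real.sqrt (D * f0))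
    (uhat : ℝ → ℝ → ℝ)
    (huhat : ∀ ξ t, uhat ξ t =
      Real.exp (-D * π ^ 2 * t / (L0 * (L0 + 2 * cs * t))) *
        Real.sin (π * ξ / L0) * (L0 / (L0 + 2 * cs * t)) ^ ((1:ℝ)/2) *
        Real.exp ((ξ * cs / (2 * D * L0)) * (L0 + 2 * cs * t) * (1 - ξ / L0)))
    (ψhat : ℝ → ℝ → ℝ)
    (hψhat : ∀ x t, ψhat x t =
      uhat ((x + cs * t + L0 / 2) * L0 / (L0 + 2 * cs * t)) t)
    (y : ℝ) (hy : 0 < y) :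
    ∃ β0 β1 T : ℝ, 0 < β0 ∧ β0 ≤ β1 ∧ 0 < T ∧
      ∀ t ≥ T, β0 * t ^ (-(3:ℝ)/2) ≤ ψhat (-cs * t - L0 / 2 + y) t ∧
        ψhat (-cs * t - L0 / 2 + y) t ≤ β1 * t ^ (-(3:ℝ)/2) := by
  have hcs0 : 0 < cs := hcs ▸ by positivity
  have hψ : ∀ t > 0, ψhat (-cs * t - L0 / 2 + y) t = boundaryProfile D L0 cs y t := by
    intro t ht
    have hM : 0 < L0 + 2 * cs * t := by positivity
    have hξ : (-cs * t - L0 / 2 + y + cs * t + L0 / 2) * L0 / (L0 + 2 * cs * t) =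
        y * L0 / (L0 + 2 * cs * t) := by ring
    rw [hψhat, huhat, boundaryProfile, hξ]
    congr 3 <;> field_simp
  exact exists_bounds_of_tendsto_div (by positivity)
    ((eventually_gt_atTop 0).mono fun t ht => rpow_pos_of_pos ht _)
    ((tendsto_boundaryProfile_div_rpow D y hL0 hcs0).congr' <|
      (eventually_gt_atTop 0).mono fun t ht => by dsimp only; rw [hψ t ht])
end

section
/- With ψ̂ as above and y(t) = (3D/c*) log(t+1), one has ψ̂(−c* t − L0/2 + y(t), t) → ∞ as t → ∞, and in fact ψ̂(−c* t − L0/2 + y(t), t) = Θ(log t). -/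
open Real Filter Topology

/-!
Write `S = L0 + 2c*t` for the width of the domain at time `t` and `ℓ = log (t + 1)`, so that
`y = (3D/c*) ℓ`. Along the ray the sine is evaluated at `π y / S → 0`, where it is `π y / S`
up to a factor `sinc → 1`; the last exponential is `exp (3ℓ/2 - (9D/(2c*)) ℓ² / S)`, i.e.
`(t + 1)^{3/2}` up to a factor tending to `1`. With `(L0/S)^{1/2}` this leaves
`ℓ · √(L0 ((t + 1)/S)³) · (1 + o(1))`, and `(t + 1)/S → 1/(2c*)`, so `ψ̂ / log t` has a
positive limit. Both claims follow from that.
-/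

theorem tendsto_atTop_and_log_bounds_of_tendsto_div_log {f : ℝ → ℝ} {K : ℝ} (hK : 0 < K)
    (hf : Tendsto (fun t => f t / log t) atTop (𝓝 K)) :
    Tendsto f atTop atTop ∧ ∃ β0 β1 T : ℝ, 0 < β0 ∧ β0 ≤ β1 ∧ 1 < T ∧
      ∀ t ≥ T, β0 * log t ≤ f t ∧ f t ≤ β1 * log t := by
  have hf_eq : (fun t => f t / log t * log t) =ᶠ[atTop] f := by
    filter_upwards [eventually_gt_atTop 1] with t ht
    exact div_mul_cancel₀ _ (log_pos ht).ne'
  refine ⟨(hf.pos_mul_atTop hK tendsto_log_atTop).congr' hf_eq, ?_⟩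
  obtain ⟨T, hT⟩ := eventually_atTop.1 <|
    (hf.eventually (Ioo_mem_nhds (half_lt_self hK) (lt_two_mul_self hK))).and
      (eventually_gt_atTop 1)
  refine ⟨K / 2, 2 * K, max T 2, by positivity, by linarith, by simp, fun t ht => ?_⟩
  obtain ⟨⟨hlo, hhi⟩, ht⟩ := hT t (le_of_max_le_left ht)
  rw [lt_div_iff₀ (log_pos ht)] at hlo
  rw [div_lt_iff₀ (log_pos ht)] at hhi
  exact ⟨hlo.le, hhi.le⟩

theorem tendsto_log_add_one_div_log :
    Tendsto (fun t => log (t + 1) / log t) atTop (𝓝 1) := by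
  have h := (tendsto_log_comp_add_sub_log 1).div_atTop tendsto_log_atTop
  refine (zero_add (1 : ℝ) ▸ h.add_const 1).congr' ?_
  filter_upwards [eventually_gt_atTop 1] with t ht
  field_simp [(log_pos ht).ne']
  ring

theorem tendsto_add_div_add_mul_atTop {a : ℝ} (ha : 0 < a) (b d : ℝ) :
    Tendsto (fun t => (t + d) / (b + a * t)) atTop (𝓝 (1 / a)) := by
  have hden : Tendsto (fun t => b + a * t) atTop atTop :=
    tendsto_atTop_add_const_left _ b (tendsto_id.const_mul_atTop ha)
  rw [← add_zero (1 / a)]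
  refine ((tendsto_const_nhds (x := (a * d - b) / a)).div_atTop hden
    |>.const_add (1 / a)).congr' ?_
  filter_upwards [hden.eventually_gt_atTop 0] with t ht
  field_simp
  ring

theorem tendsto_log_add_one_pow_div_add_mul_atTop {a : ℝ} (ha : a ≠ 0) (b : ℝ) (n : ℕ) :
    Tendsto (fun t => log (t + 1) ^ n / (b + a * t)) atTop (𝓝 0) := by
  refine ((tendsto_pow_log_div_mul_add_atTop a (b - a) n ha).comp
    (tendsto_atTop_add_const_right atTop 1 tendsto_id)).congr fun t => ?_
  rw [Function.comp_apply, id]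
  congr 1
  ring

theorem Real.mul_sinc (x : ℝ) : x * sinc x = sin x := by
  rcases eq_or_ne x 0 with rfl | hx
  · simp
  · rw [sinc_of_ne_zero hx, mul_div_cancel₀ _ hx]

noncomputable def rayFactor (D L0 cs t : ℝ) : ℝ :=
  exp (-(D * π ^ 2 / L0) * (t / (L0 + 2 * cs * t))) * (3 * π * D / cs) *
    sinc (3 * π * D / cs * (log (t + 1) / (L0 + 2 * cs * t))) *
    √(L0 * ((t + 1) / (L0 + 2 * cs * t)) ^ 3) *
    exp (-(9 * D / (2 * cs)) * (log (t + 1) ^ 2 / (L0 + 2 * cs * t)))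

theorem tendsto_rayFactor {D L0 cs : ℝ} (hcs : 0 < cs) :
    Tendsto (rayFactor D L0 cs) atTop
      (𝓝 (exp (-(D * π ^ 2 / L0) / (2 * cs)) * (3 * π * D / cs) *
        √(L0 / (2 * cs) ^ 3))) := by
  have hcs2 : 0 < 2 * cs := by positivity
  have hlin := tendsto_add_div_add_mul_atTop hcs2 L0
  have hlog := tendsto_log_add_one_pow_div_add_mul_atTop hcs2.ne' L0
  have hdecay := (((hlin 0).congr fun t => by rw [add_zero]).const_mul (-(D * π ^ 2 / L0))).rexp
  have hsinc := (continuous_sinc.tendsto _).comp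
    (((hlog 1).congr fun t => by rw [pow_one]).const_mul (3 * π * D / cs))
  have hsqrt := (((hlin 1).pow 3).const_mul L0).sqrt
  have hcorr := ((hlog 2).const_mul (-(9 * D / (2 * cs)))).rexp
  have h := (((hdecay.mul_const (3 * π * D / cs)).mul hsinc).mul hsqrt).mul hcorr
  rwa [mul_zero, mul_zero, sinc_zero, exp_zero, mul_one, mul_one, one_div_pow, mul_one_div,
    mul_one_div] at h

theorem uhat_along_ray_eq {D L0 cs t ξ : ℝ} (hD : D ≠ 0) (hL0 : L0 ≠ 0) (hcs : cs ≠ 0)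
    (ht : 0 ≤ t) (hS : 0 < L0 + 2 * cs * t)
    (hξ : ξ = 3 * D / cs * log (t + 1) * L0 / (L0 + 2 * cs * t)) :
    exp (-D * π ^ 2 * t / (L0 * (L0 + 2 * cs * t))) * sin (π * ξ / L0) *
        (L0 / (L0 + 2 * cs * t)) ^ ((1 : ℝ) / 2) *
        exp ((ξ * cs / (2 * D * L0)) * (L0 + 2 * cs * t) * (1 - ξ / L0)) =
      log (t + 1) * rayFactor D L0 cs t := by
  unfold rayFactor
  have hexp : exp (3 / 2 * log (t + 1)) = √((t + 1) ^ 3) := by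
    rw [show 3 / 2 * log (t + 1) = log ((t + 1) ^ 3) / 2 by rw [log_pow]; push_cast; ring,
      exp_half, exp_log (by positivity)]
  set S := L0 + 2 * cs * t
  set ℓ := log (t + 1)
  have hsqrt : √(L0 * ((t + 1) / S) ^ 3) = √(L0 / S) * √((t + 1) ^ 3) / S := by
    rw [show L0 * ((t + 1) / S) ^ 3 = L0 / S * (t + 1) ^ 3 / S ^ 2 by field_simp,
      sqrt_div' _ (by positivity), sqrt_sq hS.le, sqrt_mul' _ (by positivity)]
  have harg : π * ξ / L0 = 3 * π * D / cs * (ℓ / S) := by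
    rw [hξ]; field_simp
  have hexponent : ξ * cs / (2 * D * L0) * S * (1 - ξ / L0) =
      3 / 2 * ℓ + -(9 * D / (2 * cs)) * (ℓ ^ 2 / S) := by
    rw [hξ]; field_simp; ring
  rw [harg, ← mul_sinc, ← sqrt_eq_rpow, hexponent, exp_add, hexp, hsqrt,
    show -D * π ^ 2 * t / (L0 * S) = -(D * π ^ 2 / L0) * (t / S) by field_simp]
  ring

/-- With `y(t) = (3D/c*) log(t+1)`, the exact solution `ψ̂` evaluated at
`x = −c*t − L0/2 + y(t)` tends to `∞`, and is in fact `Θ(log t)`, as `t → ∞`. -/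
theorem stmt_17 (D f0 L0 : ℝ) (hD : 0 < D) (hf0 : 0 < f0) (hL0 : 0 < L0)
    (cs : ℝ) (hcs : cs = 2 * Real.sqrt (D * f0))
    (uhat : ℝ → ℝ → ℝ)
    (huhat : ∀ ξ t, uhat ξ t =
      Real.exp (-D * π ^ 2 * t / (L0 * (L0 + 2 * cs * t))) *
        Real.sin (π * ξ / L0) * (L0 / (L0 + 2 * cs * t)) ^ ((1:ℝ)/2) *
        Real.exp ((ξ * cs / (2 * D * L0)) * (L0 + 2 * cs * t) * (1 - ξ / L0)))
    (ψhat : ℝ → ℝ → ℝ)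
    (hψhat : ∀ x t, ψhat x t =
      uhat ((x + cs * t + L0 / 2) * L0 / (L0 + 2 * cs * t)) t)
    (y : ℝ → ℝ) (hy : ∀ t, y t = (3 * D / cs) * Real.log (t + 1)) :
    Tendsto (fun t => ψhat (-cs * t - L0 / 2 + y t) t) atTop atTop ∧
    ∃ β0 β1 T : ℝ, 0 < β0 ∧ β0 ≤ β1 ∧ 1 < T ∧
      ∀ t ≥ T, β0 * Real.log t ≤ ψhat (-cs * t - L0 / 2 + y t) t ∧
        ψhat (-cs * t - L0 / 2 + y t) t ≤ β1 * Real.log t := by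
  have hcs0 : 0 < cs := hcs ▸ by positivity
  have hray : ∀ t ≥ 0,
      ψhat (-cs * t - L0 / 2 + y t) t = log (t + 1) * rayFactor D L0 cs t := by
    intro t ht
    rw [hψhat, huhat]
    exact uhat_along_ray_eq hD.ne' hL0.ne' hcs0.ne' ht (by positivity) (by rw [hy]; ring)
  have hlim := (tendsto_rayFactor (D := D) (L0 := L0) hcs0).mul tendsto_log_add_one_div_log
  rw [mul_one] at hlim
  refine tendsto_atTop_and_log_bounds_of_tendsto_div_log (by positivity) (hlim.congr' ?_)
  filter_upwards [eventually_ge_atTop 0] with t ht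
  rw [hray t ht]
  ring
end
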